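/- arXiv:1911.02763 — 10 statements merged into one kernel-verified Lean document; each statement's English description precedes it below -/
import Mathlib

section
/- Let G be a finite group. If the prime coprime graph Θ(G) contains a cycle (equivalently, its girth is finite), then the girth of Θ(G) equals 3. -/
/-- The prime coprime graph of a (multiplicative) group: two distinct vertices are
adjacent iff the gcd of their orders is `1` or a prime. -/
def pcGraph (G : Type*) [Group G] : SimpleGraph G where
  Adj x y := x ≠ y ∧
    (Nat.gcd (orderOf x) (orderOf y) = 1 ∨ (Nat.gcd (orderOf x) (orderOf y)).Prime)
  symm := ⟨by
    rintro x y ⟨hxy, h⟩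
    exact ⟨hxy.symm, by rwa [Nat.gcd_comm]⟩⟩
  loopless := ⟨fun x h => h.1 rfl⟩

/-! The identity has order 1, so it is adjacent to every other element. Any cycle has an edge
`x y` avoiding the identity, and then `1, x, y` is a triangle. -/

namespace SimpleGraph

variable {V : Type*} {G : SimpleGraph V}

lemma Walk.IsCycle.exists_adj_ne {u : V} {p : G.Walk u u} (hp : p.IsCycle) (o : V) :
    ∃ x y, G.Adj x y ∧ x ≠ o ∧ y ≠ o := by
  have hlen := hp.three_le_length
  have h12 : p.getVert 1 ≠ p.getVert 2 := fun h ↦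
    absurd (hp.getVert_injOn ⟨by omega, by omega⟩ ⟨by omega, by omega⟩ h) (by omega)
  by_cases ho₁ : p.getVert 1 = o
  · have h31 : p.getVert 3 ≠ p.getVert 1 := fun h ↦
      absurd (hp.getVert_injOn ⟨by omega, by omega⟩ ⟨by omega, by omega⟩ h) (by omega)
    exact ⟨_, _, p.adj_getVert_succ (i := 2) (by omega), ho₁ ▸ h12.symm, ho₁ ▸ h31⟩
  by_cases ho₂ : p.getVert 2 = o
  · have h02 : p.getVert 0 ≠ p.getVert 2 := fun h ↦
      absurd (hp.getVert_injOn' (Nat.zero_le _) (show 2 ≤ p.length - 1 by omega) h) (by omega)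
    exact ⟨_, _, p.adj_getVert_succ (i := 0) (by omega), ho₂ ▸ h02, ho₂ ▸ h12⟩
  exact ⟨_, _, p.adj_getVert_succ (i := 1) (by omega), ho₁, ho₂⟩

lemma egirth_le_three_of_not_cliqueFree (h : ¬ G.CliqueFree 3) : G.egirth ≤ 3 :=
  calc G.egirth ≤ (completeGraph (Fin 3)).egirth :=
        ((not_cliqueFree_iff_top_isContained 3).1 h).egirth_le
    _ = 3 := egirth_top (by simp)

lemma egirth_eq_three_of_forall_adj {o : V} (ho : ∀ v ≠ o, G.Adj o v) (hG : ¬ G.IsAcyclic) :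
    G.egirth = 3 := by
  classical
  obtain ⟨u, p, hp⟩ : ∃ u, ∃ p : G.Walk u u, p.IsCycle := by simpa [IsAcyclic] using hG
  obtain ⟨x, y, hxy, hx, hy⟩ := hp.exists_adj_ne o
  have htriangle : G.IsNClique 3 {o, x, y} := is3Clique_triple_iff.2 ⟨ho x hx, ho y hy, hxy⟩
  exact le_antisymm (egirth_le_three_of_not_cliqueFree htriangle.not_cliqueFree) three_le_egirth

end SimpleGraph

lemma pcGraph_adj_one {G : Type*} [Group G] {x : G} (hx : x ≠ 1) : (pcGraph G).Adj 1 x :=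
  ⟨hx.symm, Or.inl (by simp)⟩

theorem pcGraph_girth_eq_three_general (G : Type*) [Group G]
    (h : (pcGraph G).egirth ≠ ⊤) : (pcGraph G).egirth = 3 :=
  SimpleGraph.egirth_eq_three_of_forall_adj (fun _ ↦ pcGraph_adj_one)
    (mt SimpleGraph.IsAcyclic.egirth_eq_top h)

/-- If the girth of the prime coprime graph of a finite group is finite, it equals 3. -/
theorem pcGraph_girth_eq_three (G : Type*) [Group G] [Finite G]
    (h : (pcGraph G).egirth ≠ ⊤) : (pcGraph G).egirth = 3 :=
  pcGraph_girth_eq_three_general G h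
end

section
/- Let G be a finite group. The prime coprime graph Θ(G) is a complete graph if and only if G has no element of composite order, i.e., if and only if every element of G has order equal to 1 or to a prime number. -/
/-! Since `o(x⁻¹) = o(x)`, an edge between `x` and `x⁻¹` forces `o(x)` to be `1` or prime,
and when `x = x⁻¹` the order divides `2`. Conversely, the gcd of two orders divides each of
them, and the divisors of `1` or of a prime are `1` or prime. -/

theorem Nat.eq_one_or_prime_of_dvd {d m : ℕ} (hdm : d ∣ m) (hm : m = 1 ∨ m.Prime) :
    d = 1 ∨ d.Prime := by
  rcases hm with rfl | hm
  · exact Or.inl (Nat.dvd_one.mp hdm)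
  · rcases hm.eq_one_or_self_of_dvd d hdm with rfl | rfl
    · exact Or.inl rfl
    · exact Or.inr hm

section

variable {G : Type*} [Group G]

theorem orderOf_eq_one_or_prime_of_eq_inv {x : G} (hx : x = x⁻¹) :
    orderOf x = 1 ∨ (orderOf x).Prime := by
  have hsq : x ^ 2 = 1 := by rw [pow_two, mul_eq_one_iff_eq_inv]; exact hx
  exact Nat.eq_one_or_prime_of_dvd (orderOf_dvd_of_pow_eq_one hsq) (Or.inr Nat.prime_two)

theorem orderOf_eq_one_or_prime_of_pcGraph_adj_inv {x : G} (hadj : (pcGraph G).Adj x x⁻¹) :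
    orderOf x = 1 ∨ (orderOf x).Prime := by
  simpa only [orderOf_inv, Nat.gcd_self] using hadj.2

theorem pcGraph_adj_of_orderOf_eq_one_or_prime {x y : G} (hx : orderOf x = 1 ∨ (orderOf x).Prime)
    (hxy : x ≠ y) : (pcGraph G).Adj x y :=
  ⟨hxy, Nat.eq_one_or_prime_of_dvd (Nat.gcd_dvd_left _ _) hx⟩

end

theorem pcGraph_complete_iff_general (G : Type*) [Group G] :
    pcGraph G = ⊤ ↔ ∀ x : G, orderOf x = 1 ∨ (orderOf x).Prime := by
  constructor
  · intro htop x
    by_cases hx : x = x⁻¹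
    · exact orderOf_eq_one_or_prime_of_eq_inv hx
    · exact orderOf_eq_one_or_prime_of_pcGraph_adj_inv (htop ▸ hx)
  · intro h
    ext x y
    exact ⟨SimpleGraph.Adj.ne, pcGraph_adj_of_orderOf_eq_one_or_prime (h x)⟩

/-- The prime coprime graph of a finite group is complete iff the group has no element
of composite order, i.e. every element has order 1 or prime. -/
theorem pcGraph_complete_iff (G : Type*) [Group G] [Finite G] :
    pcGraph G = ⊤ ↔ ∀ x : G, orderOf x = 1 ∨ (orderOf x).Prime :=
  pcGraph_complete_iff_general G
end

section
/- Let n ≥ 2 be a natural number. The prime coprime graph Θ(ℤ_n) of the cyclic group ℤ_n = ℤ/nℤ is a complete graph if and only if n is a prime number. -/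
/-- The prime coprime graph of an additive group: two distinct vertices are
adjacent iff the gcd of their (additive) orders is `1` or a prime. -/
def pcGraphAdd (G : Type*) [AddGroup G] : SimpleGraph G where
  Adj x y := x ≠ y ∧
    (Nat.gcd (addOrderOf x) (addOrderOf y) = 1 ∨ (Nat.gcd (addOrderOf x) (addOrderOf y)).Prime)
  symm := ⟨by
    rintro x y ⟨hxy, h⟩
    exact ⟨hxy.symm, by rwa [Nat.gcd_comm]⟩⟩
  loopless := ⟨fun x h => h.1 rfl⟩

/-! In a group of prime order `p` every gcd of element orders divides `p`, so the graph is
complete. In `ℤ/nℤ` with `n > 2` the distinct elements `1` and `-1` both have order `n`, so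
they are adjacent only if `n` is prime. -/

theorem pcGraphAdd_adj_neg_iff {G : Type*} [AddGroup G] {x : G} :
    (pcGraphAdd G).Adj x (-x) ↔ x ≠ -x ∧ (addOrderOf x = 1 ∨ (addOrderOf x).Prime) := by
  simp only [pcGraphAdd, addOrderOf_neg, Nat.gcd_self]

theorem pcGraphAdd_eq_top_of_card_prime {G : Type*} [AddGroup G] [Finite G]
    (hp : (Nat.card G).Prime) : pcGraphAdd G = ⊤ := by
  ext x y
  refine ⟨fun h => h.1, fun hxy => ⟨hxy, ?_⟩⟩
  have hdvd : Nat.gcd (addOrderOf x) (addOrderOf y) ∣ Nat.card G :=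
    (Nat.gcd_dvd_left _ _).trans (addOrderOf_dvd_natCard x)
  rcases hp.eq_one_or_self_of_dvd _ hdvd with h | h
  · exact .inl h
  · exact .inr (h ▸ hp)

/-- For n ≥ 2, the prime coprime graph of the cyclic group ℤ/nℤ is complete iff n is prime. -/
theorem pcGraph_zmod_complete_iff (n : ℕ) (hn : 2 ≤ n) :
    pcGraphAdd (ZMod n) = ⊤ ↔ n.Prime := by
  refine ⟨fun htop => ?_, fun hp => ?_⟩
  · by_contra hp
    have : Fact (2 < n) := ⟨lt_of_le_of_ne hn fun h => hp (h ▸ Nat.prime_two)⟩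
    have hadj : (pcGraphAdd (ZMod n)).Adj 1 (-1) := by
      rw [htop]
      exact ZMod.neg_one_ne_one.symm
    rw [pcGraphAdd_adj_neg_iff, ZMod.addOrderOf_one] at hadj
    obtain ⟨-, h1 | hprime⟩ := hadj
    · omega
    · exact hp hprime
  · have : NeZero n := ⟨hp.ne_zero⟩
    exact pcGraphAdd_eq_top_of_card_prime (by rwa [Nat.card_zmod])
end

section
/- Let p be a prime, let m > 1 be a natural number, and let G be a finite commutative group of order p^m. The prime coprime graph Θ(G) is a complete graph if and only if G is isomorphic to the direct product (ℤ_p)^m of m copies of the cyclic group of order p. -/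
theorem Nat.eq_one_or_prime_of_dvd_s7 {a b : ℕ} (hab : a ∣ b) (hb : b = 1 ∨ b.Prime) :
    a = 1 ∨ a.Prime := by
  rcases hb with rfl | hb
  · exact .inl (Nat.dvd_one.mp hab)
  · exact ((Nat.dvd_prime hb).mp hab).imp_right fun h : a = b => h ▸ hb

theorem Nat.eq_one_or_prime_iff_dvd_of_dvd_prime_pow {p q n : ℕ} (hp : p.Prime)
    (hq : q ∣ p ^ n) : (q = 1 ∨ q.Prime) ↔ q ∣ p := by
  rw [Nat.dvd_prime hp]
  refine or_congr_right ⟨fun hq' => (Nat.prime_dvd_prime_iff_eq hq' hp).mp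
    (hq'.dvd_of_dvd_pow hq), ?_⟩
  rintro rfl
  exact hp

theorem pcGraph_eq_top_iff {G : Type*} [Group G] :
    pcGraph G = ⊤ ↔ ∀ x : G, orderOf x = 1 ∨ (orderOf x).Prime := by
  refine ⟨fun h x => ?_, fun h => ?_⟩
  · by_cases hx : x = x⁻¹
    · have h2 : orderOf x ∣ 2 :=
        orderOf_dvd_of_pow_eq_one (by rw [pow_two, ← inv_mul_cancel x, ← hx])
      exact Nat.eq_one_or_prime_of_dvd_s7 h2 (.inr Nat.prime_two)
    · have hadj : (pcGraph G).Adj x x⁻¹ := h ▸ hx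
      simpa only [orderOf_inv, Nat.gcd_self] using hadj.2
  · ext x y
    exact ⟨fun hadj => hadj.1, fun hxy =>
      ⟨hxy, Nat.eq_one_or_prime_of_dvd_s7 (Nat.gcd_dvd_left _ _) (h x)⟩⟩

theorem pcGraph_eq_top_iff_forall_pow_eq_one {p m : ℕ} (hp : p.Prime) {G : Type*} [Group G]
    [Finite G] (hcard : Nat.card G = p ^ m) :
    pcGraph G = ⊤ ↔ ∀ x : G, x ^ p = 1 := by
  simp only [pcGraph_eq_top_iff, ← orderOf_dvd_iff_pow_eq_one]
  exact forall_congr' fun x =>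
    Nat.eq_one_or_prime_iff_dvd_of_dvd_prime_pow hp (hcard ▸ orderOf_dvd_natCard x)

theorem nonempty_addEquiv_fin_zmod_of_nsmul_eq_zero {p m : ℕ} [Fact p.Prime] {A : Type*}
    [AddCommGroup A] [Finite A] (hcard : Nat.card A = p ^ m) (h : ∀ x : A, p • x = 0) :
    Nonempty (A ≃+ (Fin m → ZMod p)) := by
  let _ : Module (ZMod p) A := AddCommGroup.zmodModule h
  -- Instance search does not see through `zmodModule` to the field structure of `ZMod p`,
  -- so the finiteness and freeness instances are passed by hand.
  have hfin : Module.Finite (ZMod p) A := .of_finite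
  have hfree : Module.Free (ZMod p) A := .of_divisionRing _ _
  have hrank : Module.finrank (ZMod p) A = m := by
    have hA := @Module.natCard_eq_pow_finrank (ZMod p) A _ _ _ hfin
    rw [Nat.card_zmod, hcard] at hA
    exact (Nat.pow_right_injective (Fact.out : p.Prime).two_le hA).symm
  exact ⟨(@Module.finBasisOfFinrankEq (ZMod p) A _ _ _ hfree _ hfin m hrank).equivFun.toAddEquiv⟩

theorem forall_pow_eq_one_iff_nonempty_mulEquiv {p m : ℕ} [Fact p.Prime] {G : Type*}
    [CommGroup G] [Finite G] (hcard : Nat.card G = p ^ m) :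
    (∀ x : G, x ^ p = 1) ↔ Nonempty (G ≃* Multiplicative (Fin m → ZMod p)) := by
  refine ⟨fun h => ?_, fun ⟨e⟩ x => e.injective ?_⟩
  · obtain ⟨e⟩ := nonempty_addEquiv_fin_zmod_of_nsmul_eq_zero (A := Additive G) hcard h
    exact ⟨AddEquiv.toMultiplicativeRight e⟩
  · rw [map_pow, map_one, ← ofAdd_toAdd (e x), ← ofAdd_nsmul, ← ofAdd_zero]
    congr 1
    funext i
    simp

theorem pcGraph_commGroup_complete_iff_general (p m : ℕ) (hp : p.Prime)
    (G : Type*) [CommGroup G] [Fintype G] (hcard : Fintype.card G = p ^ m) :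
    pcGraph G = ⊤ ↔ Nonempty (G ≃* Multiplicative (Fin m → ZMod p)) := by
  have : Fact p.Prime := ⟨hp⟩
  have hcard' : Nat.card G = p ^ m := Nat.card_eq_fintype_card.trans hcard
  rw [pcGraph_eq_top_iff_forall_pow_eq_one hp hcard']
  exact forall_pow_eq_one_iff_nonempty_mulEquiv hcard'

/-- For a finite commutative group G of order p^m (p prime, m > 1), the prime coprime
graph Θ(G) is complete iff G is isomorphic to (ℤ_p)^m. -/
theorem pcGraph_commGroup_complete_iff (p m : ℕ) (hp : p.Prime) (hm : 1 < m)
    (G : Type*) [CommGroup G] [Fintype G] (hcard : Fintype.card G = p ^ m) :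
    pcGraph G = ⊤ ↔ Nonempty (G ≃* Multiplicative (Fin m → ZMod p)) :=
  pcGraph_commGroup_complete_iff_general p m hp G hcard
end

section
/- Let n be a composite natural number and let S = S(ℤ_n) be the set of elements of ℤ_n whose additive order is 1 or a prime number. Then S is a minimum separating set of the prime coprime graph Θ(ℤ_n): the subgraph of Θ(ℤ_n) induced on the complement of S is disconnected, while for every set T of vertices with |T| < |S|, the subgraph induced on the complement of T is connected. Consequently the vertex connectivity of Θ(ℤ_n) equals |S(ℤ_n)|. -/
/-- The vertex connectivity of a graph: the minimum number of vertices whose removal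
results in a disconnected or trivial (subsingleton) graph. -/
noncomputable def vertexConnectivity {V : Type*} (G : SimpleGraph V) : ℕ :=
  sInf {k | ∃ T : Set V,
    T.ncard = k ∧ (¬ (SimpleGraph.induce Tᶜ G).Connected ∨ Tᶜ.Subsingleton)}

namespace SimpleGraph

variable {V : Type*} {G : SimpleGraph V}

lemma IsUniversal.induce {v : V} (h : G.IsUniversal v) {s : Set V} (hv : v ∈ s) :
    (G.induce s).IsUniversal ⟨v, hv⟩ :=
  fun _ hw ↦ h fun hvw ↦ hw (Subtype.ext hvw)

lemma vertexConnectivity_eq_ncard [Finite V] {S : Set V} (hS : Sᶜ.Nonempty)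
    (hsep : ¬ (G.induce Sᶜ).Connected)
    (hmin : ∀ T : Set V, T.ncard < S.ncard → (G.induce Tᶜ).Connected) :
    vertexConnectivity G = S.ncard := by
  refine le_antisymm (Nat.sInf_le ⟨S, rfl, .inl hsep⟩) <|
    le_csInf ⟨_, S, rfl, .inl hsep⟩ ?_
  rintro _ ⟨T, rfl, hT | hT⟩
  · by_contra! hlt
    exact hT (hmin T hlt)
  · have hS' : 1 ≤ Sᶜ.ncard := hS.ncard_pos
    have hT' : Tᶜ.ncard ≤ 1 := Set.ncard_le_one_iff_subsingleton.mpr hT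
    have := S.ncard_add_ncard_compl
    have := T.ncard_add_ncard_compl
    omega

end SimpleGraph

open SimpleGraph

def primeOrderSet (G : Type*) [AddGroup G] : Set G :=
  {x | addOrderOf x = 1 ∨ (addOrderOf x).Prime}

section pcGraphAdd

variable {G : Type*} [AddGroup G]

lemma pcGraphAdd_isUniversal {x : G} (hx : x ∈ primeOrderSet G) :
    (pcGraphAdd G).IsUniversal x := by
  refine fun y hxy ↦ ⟨hxy, ?_⟩
  rcases hx with hx | hx
  · simp [hx]
  · exact (hx.eq_one_or_self_of_dvd _ (Nat.gcd_dvd_left _ _)).imp id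
      fun h ↦ by rwa [h]

lemma neg_mem_primeOrderSet_iff {x : G} : -x ∈ primeOrderSet G ↔ x ∈ primeOrderSet G := by
  simp only [primeOrderSet, Set.mem_ofPred_eq, addOrderOf_neg]

lemma pcGraphAdd_not_adj_of_addOrderOf_dvd {x y : G} (hyx : addOrderOf y ∣ addOrderOf x)
    (hy : y ∉ primeOrderSet G) : ¬ (pcGraphAdd G).Adj x y := by
  rintro ⟨-, hxy⟩
  rw [Nat.gcd_eq_right hyx] at hxy
  exact hy hxy

lemma pcGraphAdd_induce_compl_connected_of_ncard_lt [Finite G] {T : Set G}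
    (hT : T.ncard < (primeOrderSet G).ncard) : ((pcGraphAdd G).induce Tᶜ).Connected := by
  obtain ⟨s, hsS, hsT⟩ := Set.exists_mem_notMem_of_ncard_lt_ncard hT
  exact .of_isUniversal ((pcGraphAdd_isUniversal hsS).induce hsT)

end pcGraphAdd

namespace ZMod

variable {n : ℕ}

lemma one_notMem_primeOrderSet (hn : 1 < n) (hnp : ¬ n.Prime) :
    (1 : ZMod n) ∉ primeOrderSet (ZMod n) := by
  simp only [primeOrderSet, Set.mem_ofPred_eq, addOrderOf_one, hnp, or_false]
  omega

lemma isIsolated_one_induce_compl_primeOrderSet [NeZero n] (h : (1 : ZMod n) ∉ primeOrderSet _) :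
    ((pcGraphAdd (ZMod n)).induce (primeOrderSet _)ᶜ).IsIsolated ⟨1, h⟩ := by
  rintro ⟨y, hy⟩
  refine pcGraphAdd_not_adj_of_addOrderOf_dvd ?_ hy
  simpa [addOrderOf_one, card] using addOrderOf_dvd_card (x := y)

lemma not_connected_induce_compl_primeOrderSet (hn : 1 < n) (hnp : ¬ n.Prime) :
    ¬ ((pcGraphAdd (ZMod n)).induce (primeOrderSet _)ᶜ).Connected := by
  have : NeZero n := ⟨by omega⟩
  have : Fact (2 < n) := ⟨by grind [Nat.prime_two]⟩
  have h1 := one_notMem_primeOrderSet hn hnp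
  have hm1 : (-1 : ZMod n) ∉ primeOrderSet _ := by rwa [neg_mem_primeOrderSet_iff]
  have : Nontrivial ↥(primeOrderSet (ZMod n))ᶜ :=
    ⟨⟨1, h1⟩, ⟨-1, hm1⟩, fun h ↦ neg_one_ne_one (congrArg Subtype.val h).symm⟩
  exact fun hconn ↦
    hconn.preconnected.not_isIsolated _ (isIsolated_one_induce_compl_primeOrderSet h1)

end ZMod

/-- For composite n, the set S of elements of ℤ/nℤ of order 1 or prime order is a
minimum separating set of the prime coprime graph, and the vertex connectivity
equals |S|. -/
theorem pcGraph_zmod_vertexConnectivity (n : ℕ) (hn : 1 < n) (hnp : ¬ n.Prime) :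
    let S : Set (ZMod n) := {x | addOrderOf x = 1 ∨ (addOrderOf x).Prime}
    ¬ (SimpleGraph.induce Sᶜ (pcGraphAdd (ZMod n))).Connected ∧
    (∀ T : Set (ZMod n), T.ncard < S.ncard →
      (SimpleGraph.induce Tᶜ (pcGraphAdd (ZMod n))).Connected) ∧
    vertexConnectivity (pcGraphAdd (ZMod n)) = S.ncard := by
  change let S := primeOrderSet (ZMod n); _
  have : NeZero n := ⟨by omega⟩
  have hsep := ZMod.not_connected_induce_compl_primeOrderSet hn hnp
  have hmin (T : Set (ZMod n)) := pcGraphAdd_induce_compl_connected_of_ncard_lt (T := T)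
  exact ⟨hsep, hmin,
    vertexConnectivity_eq_ncard ⟨1, ZMod.one_notMem_primeOrderSet hn hnp⟩ hsep hmin⟩
end

section
/- Let p be a prime and let m ≥ 2 be a natural number, and let S = S(ℤ_{p^m}) be the set of elements of ℤ_{p^m} whose additive order is 1 or a prime number. Then |S| = p, and the vertex connectivity of the prime coprime graph Θ(ℤ_{p^m}) equals p: removing the p vertices of S disconnects Θ(ℤ_{p^m}), while removing any set of fewer than p vertices leaves a connected graph. -/
namespace Nat

theorem eq_one_or_prime_of_dvd_s12 {a b : ℕ} (hb : b = 1 ∨ b.Prime) (hab : a ∣ b) :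
    a = 1 ∨ a.Prime := by
  rcases hb with rfl | hb
  · exact Or.inl (Nat.dvd_one.mp hab)
  · exact (hb.eq_one_or_self_of_dvd a hab).imp_right fun h => by rwa [h]

theorem not_eq_one_or_prime_of_sq_dvd {p n : ℕ} (hp : p.Prime) (h : p ^ 2 ∣ n) :
    ¬(n = 1 ∨ n.Prime) := fun hn =>
  (eq_one_or_prime_of_dvd_s12 hn h).elim
    (fun h1 => hp.ne_one ((Nat.pow_eq_one.mp h1).resolve_right two_ne_zero))
    (Nat.Prime.not_prime_pow le_rfl)

theorem dvd_or_sq_dvd_of_dvd_prime_pow {p m n : ℕ} (hp : p.Prime) (h : n ∣ p ^ m) :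
    n ∣ p ∨ p ^ 2 ∣ n := by
  obtain ⟨k, -, rfl⟩ := (Nat.dvd_prime_pow hp).mp h
  rcases Nat.lt_or_ge k 2 with hk | hk
  · exact Or.inl ((Nat.pow_dvd_pow p (Nat.le_of_lt_succ hk)).trans (pow_one p).dvd)
  · exact Or.inr (Nat.pow_dvd_pow p hk)

end Nat

theorem Set.not_subsingleton_compl_of_ncard_add_two_le {V : Type*} [Finite V] {T : Set V}
    (h : T.ncard + 2 ≤ Nat.card V) : ¬ Tᶜ.Subsingleton := fun hT => by
  have := Set.ncard_add_ncard_compl T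
  have := Set.ncard_le_one_iff_subsingleton.mpr hT
  omega

namespace SimpleGraph

variable {V : Type*} {G : SimpleGraph V}

theorem induce_connected_of_forall_adj {U : Set V} {s : V} (hs : s ∈ U)
    (h : ∀ x ∈ U, x ≠ s → G.Adj s x) : (G.induce U).Connected := by
  have hreach : ∀ x : U, (G.induce U).Reachable ⟨s, hs⟩ x := fun ⟨x, hx⟩ => by
    by_cases hxs : x = s
    · subst hxs; rfl
    · exact Adj.reachable (h x hx hxs)
  have : Nonempty U := ⟨⟨s, hs⟩⟩
  exact ⟨fun x y => (hreach x).symm.trans (hreach y)⟩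

theorem not_induce_connected_of_forall_not_adj {U : Set V} (hU : ¬ U.Subsingleton)
    (h : ∀ x ∈ U, ∀ y ∈ U, ¬ G.Adj x y) : ¬ (G.induce U).Connected := by
  have hbot : G.induce U = ⊥ := by
    ext x y
    exact iff_of_false (h x x.2 y y.2) id
  have : Nontrivial U := Set.nontrivial_coe_sort.mpr (Set.not_subsingleton_iff.mp hU)
  rw [hbot]
  exact not_connected_bot

theorem induce_compl_connected_of_ncard_lt [Finite V] {S T : Set V}
    (hS : ∀ s ∈ S, ∀ x, x ≠ s → G.Adj s x) (hT : T.ncard < S.ncard) :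
    (G.induce Tᶜ).Connected := by
  obtain ⟨s, hsS, hsT⟩ := Set.exists_mem_notMem_of_ncard_lt_ncard hT
  exact induce_connected_of_forall_adj hsT fun x _ hxs => hS s hsS x hxs

end SimpleGraph

theorem vertexConnectivity_eq_ncard {V : Type*} {G : SimpleGraph V} {S : Set V}
    (hS : ¬ (G.induce Sᶜ).Connected)
    (hT : ∀ T : Set V, T.ncard < S.ncard → (G.induce Tᶜ).Connected ∧ ¬ Tᶜ.Subsingleton) :
    vertexConnectivity G = S.ncard := by
  refine le_antisymm (Nat.sInf_le ⟨S, rfl, Or.inl hS⟩) (le_csInf ⟨_, S, rfl, Or.inl hS⟩ ?_)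
  rintro k ⟨T, rfl, hdisc⟩
  by_contra! hlt
  obtain ⟨hconn, hnsub⟩ := hT T hlt
  exact hdisc.elim (· hconn) hnsub

section PrimeCoprimeGraph

variable {G : Type*} [AddGroup G]

theorem pcGraphAdd_adj_of_addOrderOf_eq_one_or_prime {s x : G}
    (hs : addOrderOf s = 1 ∨ (addOrderOf s).Prime) (hsx : s ≠ x) : (pcGraphAdd G).Adj s x :=
  ⟨hsx, Nat.eq_one_or_prime_of_dvd_s12 hs (Nat.gcd_dvd_left _ _)⟩

theorem pcGraphAdd_not_adj_of_sq_dvd {p : ℕ} (hp : p.Prime) {x y : G}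
    (hx : p ^ 2 ∣ addOrderOf x) (hy : p ^ 2 ∣ addOrderOf y) : ¬ (pcGraphAdd G).Adj x y :=
  fun h => Nat.not_eq_one_or_prime_of_sq_dvd hp (Nat.dvd_gcd hx hy) h.2

end PrimeCoprimeGraph

section PrimePowerGroup

variable {G : Type*} [AddGroup G] {p m : ℕ}

theorem addOrderOf_dvd_or_sq_dvd (hp : p.Prime) (hG : Nat.card G = p ^ m) (x : G) :
    addOrderOf x ∣ p ∨ p ^ 2 ∣ addOrderOf x :=
  Nat.dvd_or_sq_dvd_of_dvd_prime_pow hp (hG ▸ addOrderOf_dvd_natCard x)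

theorem addOrderOf_eq_one_or_prime_iff (hp : p.Prime) (hG : Nat.card G = p ^ m) (x : G) :
    addOrderOf x = 1 ∨ (addOrderOf x).Prime ↔ p • x = 0 := by
  rw [← addOrderOf_dvd_iff_nsmul_eq_zero]
  refine ⟨fun h => ?_, Nat.eq_one_or_prime_of_dvd_s12 (Or.inr hp)⟩
  exact (addOrderOf_dvd_or_sq_dvd hp hG x).resolve_right
    fun hsq => Nat.not_eq_one_or_prime_of_sq_dvd hp hsq h

theorem sq_dvd_addOrderOf (hp : p.Prime) (hG : Nat.card G = p ^ m) {x : G} (hx : p • x ≠ 0) :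
    p ^ 2 ∣ addOrderOf x :=
  (addOrderOf_dvd_or_sq_dvd hp hG x).resolve_left (mt addOrderOf_dvd_iff_nsmul_eq_zero.mp hx)

end PrimePowerGroup

open Finset in
theorem IsAddCyclic.ncard_nsmul_eq_zero {G : Type*} [AddGroup G] [IsAddCyclic G] [Finite G]
    {d : ℕ} (hd : d ∣ Nat.card G) : {x : G | d • x = 0}.ncard = d := by
  classical
  have : Fintype G := Fintype.ofFinite G
  rw [Nat.card_eq_fintype_card] at hd
  calc {x : G | d • x = 0}.ncard
      = ∑ e ∈ d.divisors, #{x : G | addOrderOf x = e} := by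
        rw [sum_card_addOrderOf_eq_card_nsmul_eq_zero
          (ne_zero_of_dvd_ne_zero Fintype.card_ne_zero hd), ← Set.ncard_coe_finset,
          coe_filter_univ]
    _ = ∑ e ∈ d.divisors, e.totient := sum_congr rfl fun e he =>
        IsAddCyclic.card_addOrderOf_eq_totient ((Nat.dvd_of_mem_divisors he).trans hd)
    _ = d := Nat.sum_totient d

/-- For a prime p and m ≥ 2, the set S of elements of ℤ/p^mℤ of order 1 or prime order
has p elements; removing S disconnects the prime coprime graph while removing fewer
than p vertices leaves it connected, so its vertex connectivity is p. -/
theorem pcGraph_zmod_prime_pow_vertexConnectivity (p m : ℕ) (hp : p.Prime) (hm : 2 ≤ m) :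
    let S : Set (ZMod (p ^ m)) := {x | addOrderOf x = 1 ∨ (addOrderOf x).Prime}
    S.ncard = p ∧
    ¬ (SimpleGraph.induce Sᶜ (pcGraphAdd (ZMod (p ^ m)))).Connected ∧
    (∀ T : Set (ZMod (p ^ m)), T.ncard < p →
      (SimpleGraph.induce Tᶜ (pcGraphAdd (ZMod (p ^ m)))).Connected) ∧
    vertexConnectivity (pcGraphAdd (ZMod (p ^ m))) = p := by
  intro S
  have : NeZero (p ^ m) := ⟨pow_ne_zero m hp.ne_zero⟩
  have hcard : Nat.card (ZMod (p ^ m)) = p ^ m := Nat.card_zmod _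
  have hS : S = {x | p • x = 0} := Set.ext (addOrderOf_eq_one_or_prime_iff hp hcard)
  have hSp : S.ncard = p :=
    hS ▸ IsAddCyclic.ncard_nsmul_eq_zero (by rw [hcard]; exact dvd_pow_self p (by omega))
  have hpm : p + 2 ≤ p ^ m := calc
    p + 2 ≤ p ^ 2 := by nlinarith [hp.two_le]
    _ ≤ p ^ m := Nat.pow_le_pow_right hp.pos hm
  have hnsub (T : Set (ZMod (p ^ m))) (hT : T.ncard ≤ p) : ¬ Tᶜ.Subsingleton :=
    Set.not_subsingleton_compl_of_ncard_add_two_le (by omega)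
  have hdisc : ¬ (SimpleGraph.induce Sᶜ (pcGraphAdd (ZMod (p ^ m)))).Connected :=
    SimpleGraph.not_induce_connected_of_forall_not_adj (hnsub S hSp.le) fun x hx y hy =>
      pcGraphAdd_not_adj_of_sq_dvd hp (sq_dvd_addOrderOf hp hcard (by rwa [hS] at hx))
        (sq_dvd_addOrderOf hp hcard (by rwa [hS] at hy))
  have hconn (T : Set (ZMod (p ^ m))) (hT : T.ncard < p) :
      (SimpleGraph.induce Tᶜ (pcGraphAdd (ZMod (p ^ m)))).Connected :=
    SimpleGraph.induce_compl_connected_of_ncard_lt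
      (fun s hs x hxs => pcGraphAdd_adj_of_addOrderOf_eq_one_or_prime hs hxs.symm)
      (hT.trans_eq hSp.symm)
  refine ⟨hSp, hdisc, hconn, (vertexConnectivity_eq_ncard hdisc fun T hT => ?_).trans hSp⟩
  exact ⟨hconn T (hT.trans_eq hSp), hnsub T (hT.trans_eq hSp).le⟩
end

section
/- Let n be a natural number having at least two distinct prime divisors. Then the prime coprime graph Θ(ℤ_n) contains five pairwise adjacent vertices, i.e., it contains the complete graph K_5 as a subgraph. -/
/-! If `p ≠ q` are primes dividing `|G|` with `q` odd, Cauchy's theorem gives `x` of order `p` and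
`y` of order `q`. Then `0, x, y, -y, x + y` have orders `1, p, q, q, pq`, all divisors of `pq`, and
two divisors of `pq` have gcd `1`, `p`, `q`, or `pq` only when both equal `pq`. So these five
vertices are pairwise adjacent; `y ≠ -y` because `q` is odd. -/

theorem Nat.eq_one_or_prime_of_dvd_mul_of_ne {p q d : ℕ} (hp : p.Prime) (hq : q.Prime)
    (hd : d ∣ p * q) (hne : d ≠ p * q) : d = 1 ∨ d.Prime := by
  obtain ⟨a, b, ha, hb, rfl⟩ := Nat.dvd_mul.mp hd
  rcases (Nat.dvd_prime hp).mp ha with rfl | rfl <;>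
    rcases (Nat.dvd_prime hq).mp hb with rfl | rfl
  · simp
  · exact Or.inr (by simpa using hq)
  · exact Or.inr (by simpa using hp)
  · exact absurd rfl hne

theorem pcGraphAdd_adj_of_addOrderOf_dvd_mul {G : Type*} [AddGroup G] {p q : ℕ} (hp : p.Prime)
    (hq : q.Prime) {x y : G} (hxy : x ≠ y) (hx : addOrderOf x ∣ p * q)
    (hx_lt : addOrderOf x < p * q) (hy : addOrderOf y ∣ p * q) :
    (pcGraphAdd G).Adj x y := by
  refine ⟨hxy, Nat.eq_one_or_prime_of_dvd_mul_of_ne hp hq ((Nat.gcd_dvd_right _ _).trans hy) ?_⟩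
  have hx_pos : 0 < addOrderOf x := Nat.pos_of_dvd_of_pos hx (Nat.mul_pos hp.pos hq.pos)
  exact ((Nat.le_of_dvd hx_pos (Nat.gcd_dvd_left _ _)).trans_lt hx_lt).ne

theorem pcGraphAdd_exists_K5_of_addOrderOf {G : Type*} [AddCommGroup G] {p q : ℕ} (hp : p.Prime)
    (hq : q.Prime) (hpq : p ≠ q) (hq2 : q ≠ 2) {x y : G} (hx : addOrderOf x = p)
    (hy : addOrderOf y = q) :
    ∃ v : Fin 5 → G, Function.Injective v ∧
      ∀ i j : Fin 5, i ≠ j → (pcGraphAdd G).Adj (v i) (v j) := by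
  have hxy : addOrderOf (x + y) = p * q := by
    rw [(AddCommute.all x y).addOrderOf_add_eq_mul_addOrderOf_of_coprime
      (hx ▸ hy ▸ (Nat.coprime_primes hp hq).mpr hpq), hx, hy]
  have hy_neg : y ≠ -y := by
    intro h
    have : q ∣ 2 := hy ▸ addOrderOf_dvd_of_nsmul_eq_zero
      (by rw [two_nsmul]; exact eq_neg_iff_add_eq_zero.mp h)
    exact hq2 ((Nat.prime_dvd_prime_iff_eq hq Nat.prime_two).mp this)
  have hp1 := hp.one_lt
  have hq1 := hq.one_lt
  have hp_lt : p < p * q := lt_mul_of_one_lt_right hp.pos hq1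
  have hq_lt : q < p * q := lt_mul_of_one_lt_left hq.pos hp1
  set v : Fin 5 → G := ![0, x, y, -y, x + y]
  have hord : ∀ i, addOrderOf (v i) = ![1, p, q, q, p * q] i := by
    intro i; fin_cases i <;> simp [v, hx, hy, hxy]
  have hdvd : ∀ i, addOrderOf (v i) ∣ p * q := by
    intro i; fin_cases i <;> simp [hord]
  have hlt : ∀ i j : Fin 5, i < j → addOrderOf (v i) < p * q := by
    intro i j hij; fin_cases i <;> fin_cases j <;> simp [hord] at hij ⊢ <;> omega
  have hne : ∀ i j : Fin 5, i < j → v i ≠ v j := by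
    intro i j hij
    fin_cases i <;> fin_cases j <;> first | exact absurd hij (by decide) | exact hy_neg |
      exact ne_of_apply_ne addOrderOf (by simp [hord]; omega)
  have hadj : ∀ i j : Fin 5, i ≠ j → (pcGraphAdd G).Adj (v i) (v j) := by
    intro i j hij
    rcases hij.lt_or_gt with h | h
    · exact pcGraphAdd_adj_of_addOrderOf_dvd_mul hp hq (hne i j h) (hdvd i) (hlt i j h) (hdvd j)
    · exact (pcGraphAdd_adj_of_addOrderOf_dvd_mul hp hq (hne j i h) (hdvd j) (hlt j i h)
        (hdvd i)).symm
  exact ⟨v, fun i j hv => by_contra fun hij => (hadj i j hij).ne hv, hadj⟩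

theorem pcGraphAdd_exists_K5 {G : Type*} [AddCommGroup G] [Finite G]
    (hG : 2 ≤ (Nat.card G).primeFactors.card) :
    ∃ v : Fin 5 → G, Function.Injective v ∧
      ∀ i j : Fin 5, i ≠ j → (pcGraphAdd G).Adj (v i) (v j) := by
  obtain ⟨q, hq, hq2⟩ := Finset.exists_mem_ne hG 2
  obtain ⟨p, hp, hpq⟩ := Finset.exists_mem_ne hG q
  rw [Nat.mem_primeFactors] at hp hq
  have := Fact.mk hp.1
  have := Fact.mk hq.1
  obtain ⟨x, hx⟩ := exists_prime_addOrderOf_dvd_card' p hp.2.1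
  obtain ⟨y, hy⟩ := exists_prime_addOrderOf_dvd_card' q hq.2.1
  exact pcGraphAdd_exists_K5_of_addOrderOf hp.1 hq.1 hpq hq2 hx hy

/-- If n has at least two distinct prime divisors, then the prime coprime graph of
ℤ/nℤ contains five pairwise adjacent vertices, i.e. a K₅ subgraph. -/
theorem pcGraph_zmod_contains_K5 (n : ℕ) (hn : 2 ≤ n.primeFactors.card) :
    ∃ v : Fin 5 → ZMod n, Function.Injective v ∧
      ∀ i j : Fin 5, i ≠ j → (pcGraphAdd (ZMod n)).Adj (v i) (v j) := by
  have : NeZero n := ⟨by rintro rfl; simp at hn⟩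
  exact pcGraphAdd_exists_K5 (by rwa [Nat.card_zmod])
end

section
/- Let p and q be distinct primes. The characteristic polynomial of the signless Laplacian matrix Q of the prime coprime graph Θ(ℤ_{pq}), viewed as a real matrix, equals (X − (p+q−1))^{pq−p−q} · (X − (pq−2))^{p+q−2} · (X² − (pq + 2p + 2q − 4)·X + 2(p+q−1)(p+q−2)). In particular, the eigenvalues of Q are p+q−1 with multiplicity pq−p−q, pq−2 with multiplicity p+q−2, and the two roots of X² − (pq+2p+2q−4)X + 2(p+q−1)(p+q−2) = 0, each with multiplicity 1. -/
/-!
The order of every element of `ℤ_{pq}` divides `pq`, so the gcd of two orders is `1`, `p`, `q`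
or `pq`, and it is `pq` exactly when both elements are generators. Hence `Θ(ℤ_{pq})` is the
complete split graph whose independent set `S` consists of the `φ(pq)` generators and whose
clique is the set of the `t = p + q - 1` other elements. Its signless Laplacian is the diagonal
matrix with entries `t` on `S` and `pq - 2` off `S`, plus the rank-two matrix `J - 1_S 1_Sᵀ`.
For `x` different from both diagonal values, the matrix determinant lemma turns `det (x I - Q)`
into a `2 × 2` determinant, and agreement at infinitely many `x` gives the polynomial identity.
-/

open Polynomial

open Classical in
/-- The signless Laplacian matrix Q = D + A of a finite simple graph, as a real matrix. -/
noncomputable def signlessLaplacian (V : Type*) [Fintype V] (G : SimpleGraph V) :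
    Matrix V V ℝ :=
  Matrix.of fun i j =>
    if i = j then (G.degree i : ℝ) else if G.Adj i j then 1 else 0

open Finset Matrix

theorem Nat.dvd_prime_mul_prime {p q d : ℕ} (hp : p.Prime) (hq : q.Prime) :
    d ∣ p * q ↔ d = 1 ∨ d = p ∨ d = q ∨ d = p * q := by
  constructor
  · intro hd
    obtain ⟨a, b, ha, hb, rfl⟩ := Nat.dvd_mul.1 hd
    rcases (Nat.dvd_prime hp).1 ha with rfl | rfl <;>
      rcases (Nat.dvd_prime hq).1 hb with rfl | rfl <;> simp
  · rintro (rfl | rfl | rfl | rfl)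
    exacts [one_dvd _, dvd_mul_right d q, dvd_mul_left d p, dvd_rfl]

theorem Nat.eq_one_or_prime_iff_ne_of_dvd_prime_mul_prime {p q d : ℕ} (hp : p.Prime)
    (hq : q.Prime) (hd : d ∣ p * q) : d = 1 ∨ d.Prime ↔ d ≠ p * q := by
  constructor
  · rintro (rfl | hd) h
    · exact hp.ne_one (Nat.dvd_one.1 (h ▸ dvd_mul_right p q))
    · exact Nat.not_prime_mul hp.ne_one hq.ne_one (h ▸ hd)
  · intro hne
    rcases (Nat.dvd_prime_mul_prime hp hq).1 hd with h | h | h | h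
    exacts [.inl h, .inr (h ▸ hp), .inr (h ▸ hq), (hne h).elim]

theorem Nat.gcd_eq_iff_eq_and_eq_of_dvd {a b n : ℕ} (ha : a ∣ n) (hb : b ∣ n) :
    Nat.gcd a b = n ↔ a = n ∧ b = n := by
  refine ⟨fun h => ⟨?_, ?_⟩, fun ⟨ha', hb'⟩ => by rw [ha', hb', Nat.gcd_self]⟩
  · exact Nat.dvd_antisymm ha (h ▸ Nat.gcd_dvd_left a b)
  · exact Nat.dvd_antisymm hb (h ▸ Nat.gcd_dvd_right a b)

theorem Nat.totient_prime_mul_prime_add {p q : ℕ} (hp : p.Prime) (hq : q.Prime) (hpq : p ≠ q) :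
    Nat.totient (p * q) + (p + q) = p * q + 1 := by
  rw [Nat.totient_mul ((Nat.coprime_primes hp hq).2 hpq), Nat.totient_prime hp,
    Nat.totient_prime hq]
  zify [hp.one_le, hq.one_le]
  ring

def completeSplitGraph {V : Type*} (S : Set V) : SimpleGraph V where
  Adj x y := x ≠ y ∧ ¬(x ∈ S ∧ y ∈ S)
  symm := ⟨fun _ _ h => ⟨h.1.symm, fun h' => h.2 h'.symm⟩⟩
  loopless := ⟨fun _ h => h.1 rfl⟩

@[simp]
theorem completeSplitGraph_adj {V : Type*} {S : Set V} {x y : V} :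
    (completeSplitGraph S).Adj x y ↔ x ≠ y ∧ ¬(x ∈ S ∧ y ∈ S) := Iff.rfl

theorem pcGraphAdd_eq_completeSplitGraph {G : Type*} [AddGroup G] [Finite G] {p q : ℕ}
    (hp : p.Prime) (hq : q.Prime) (hG : Nat.card G = p * q) :
    pcGraphAdd G = completeSplitGraph {x | addOrderOf x = p * q} := by
  ext x y
  have hdvd : ∀ z : G, addOrderOf z ∣ p * q := fun z => hG ▸ addOrderOf_dvd_natCard z
  simp only [pcGraphAdd, completeSplitGraph_adj, Set.mem_ofPred_eq,
    Nat.eq_one_or_prime_iff_ne_of_dvd_prime_mul_prime hp hq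
      ((Nat.gcd_dvd_left _ _).trans (hdvd x)),
    Ne, Nat.gcd_eq_iff_eq_and_eq_of_dvd (hdvd x) (hdvd y)]

section

variable {V : Type*} [Fintype V] [DecidableEq V] (S : Finset V)

theorem Finset.sum_univ_ite_mem {R : Type*} [CommSemiring R] (u v : R) :
    ∑ i, (if i ∈ S then u else v) = #S * u + #Sᶜ * v := by
  simp [Finset.sum_ite, Finset.filter_notMem_eq_sdiff, Finset.compl_eq_univ_sdiff]

theorem Finset.prod_univ_ite_mem {R : Type*} [CommMonoid R] (u v : R) :
    ∏ i, (if i ∈ S then u else v) = u ^ #S * v ^ #Sᶜ := by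
  simp [Finset.prod_ite, Finset.filter_notMem_eq_sdiff, Finset.compl_eq_univ_sdiff]

theorem Matrix.det_diagonal_ite_mem_sub {K : Type*} [Field K] {a b : K} (ha : a ≠ 0)
    (hb : b ≠ 0) (hS : S.Nonempty) (hSc : Sᶜ.Nonempty) :
    (diagonal (fun i => if i ∈ S then a else b) -
        of fun i j => if i ∈ S ∧ j ∈ S then 0 else 1).det =
      a ^ (#S - 1) * b ^ (#Sᶜ - 1) * (a * b - #Sᶜ * a - #S * #Sᶜ) := by
  set d : V → K := fun i => if i ∈ S then a else b
  let U : Matrix V (Fin 2) K := of fun i => ![-1, if i ∈ S then 1 else 0]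
  let W : Matrix (Fin 2) V K := of ![1, fun j => if j ∈ S then 1 else 0]
  have hUW : (diagonal d - of fun i j => if i ∈ S ∧ j ∈ S then 0 else 1) =
      diagonal d + U * W := by
    ext i j
    by_cases hi : i ∈ S <;> by_cases hj : j ∈ S <;>
      simp [U, W, mul_apply, hi, hj, sub_eq_add_neg]
  have hdet : IsUnit (diagonal d).det := by
    rw [det_diagonal, prod_univ_ite_mem, isUnit_iff_ne_zero]
    exact mul_ne_zero (pow_ne_zero _ ha) (pow_ne_zero _ hb)
  have hinv : (diagonal d)⁻¹ = diagonal fun i => if i ∈ S then a⁻¹ else b⁻¹ := by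
    refine inv_eq_right_inv ?_
    rw [diagonal_mul_diagonal, ← diagonal_one]
    congr 1 with i
    by_cases hi : i ∈ S <;> simp [d, hi, ha, hb]
  have hM : 1 + W * (diagonal d)⁻¹ * U =
      !![1 - #S / a - #Sᶜ / b, #S / a; -(#S / a), 1 + #S / a] := by
    rw [hinv]
    ext k l
    rw [Matrix.add_apply, mul_apply]
    simp only [mul_diagonal]
    fin_cases k <;> fin_cases l <;> simp +contextual [U, W, sum_univ_ite_mem, mul_ite] <;> ring
  rw [hUW, det_add_mul U W hdet, hM, det_fin_two_of, det_diagonal, prod_univ_ite_mem]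
  obtain ⟨s, hs⟩ := Nat.exists_eq_add_one_of_ne_zero hS.card_pos.ne'
  obtain ⟨t, ht⟩ := Nat.exists_eq_add_one_of_ne_zero hSc.card_pos.ne'
  rw [hs, ht]
  field_simp
  push_cast
  ring

theorem completeSplitGraph_neighborFinset (v : V)
    [Fintype ((completeSplitGraph (S : Set V)).neighborSet v)] :
    (completeSplitGraph (S : Set V)).neighborFinset v = if v ∈ S then Sᶜ else univ.erase v := by
  ext w
  rw [SimpleGraph.mem_neighborFinset, completeSplitGraph_adj]
  split_ifs with hv
  · simpa [hv] using fun hw => ne_of_mem_of_not_mem hv hw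
  · simp [hv, eq_comm]

theorem completeSplitGraph_degree (v : V)
    [Fintype ((completeSplitGraph (S : Set V)).neighborSet v)] :
    (completeSplitGraph (S : Set V)).degree v =
      if v ∈ S then #Sᶜ else Fintype.card V - 1 := by
  rw [← SimpleGraph.card_neighborFinset_eq_degree, completeSplitGraph_neighborFinset]
  split_ifs
  · rfl
  · simp

theorem signlessLaplacian_completeSplitGraph :
    signlessLaplacian V (completeSplitGraph (S : Set V)) =
      diagonal (fun i => if i ∈ S then (#Sᶜ : ℝ) else Fintype.card V - 2) +
        of fun i j => if i ∈ S ∧ j ∈ S then 0 else 1 := by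
  ext i j
  have hV : 1 ≤ Fintype.card V := Fintype.card_pos_iff.2 ⟨i⟩
  by_cases hij : i = j
  · subst hij
    by_cases hi : i ∈ S
    · simp [signlessLaplacian, completeSplitGraph_degree, hi]
    · simp [signlessLaplacian, completeSplitGraph_degree, hi, Nat.cast_sub hV]
      ring
  · by_cases hi : i ∈ S <;> by_cases hj : j ∈ S <;> simp [signlessLaplacian, hij, hi, hj]

theorem charpoly_signlessLaplacian_completeSplitGraph (hS : S.Nonempty) (hSc : Sᶜ.Nonempty) :
    (signlessLaplacian V (completeSplitGraph (S : Set V))).charpoly =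
      (X - C (#Sᶜ : ℝ)) ^ (#S - 1) * (X - C ((Fintype.card V : ℝ) - 2)) ^ (#Sᶜ - 1) *
        (X ^ 2 - C ((Fintype.card V : ℝ) + 2 * #Sᶜ - 2) * X +
          C (2 * #Sᶜ * (#Sᶜ - 1 : ℝ))) := by
  refine eq_of_infinite_eval_eq _ _
    ((Set.toFinite {(#Sᶜ : ℝ), (Fintype.card V : ℝ) - 2}).infinite_compl.mono ?_)
  rintro x hx
  simp only [Set.mem_compl_iff, Set.mem_insert_iff, Set.mem_singleton_iff, not_or] at hx
  have hshift : scalar V x - signlessLaplacian V (completeSplitGraph (S : Set V)) =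
      diagonal (fun i => if i ∈ S then x - #Sᶜ else x - (Fintype.card V - 2)) -
        of fun i j => if i ∈ S ∧ j ∈ S then 0 else 1 := by
    rw [signlessLaplacian_completeSplitGraph, scalar_apply, sub_add_eq_sub_sub, diagonal_sub]
    congr 2 with i
    split_ifs <;> rfl
  have hcard : (Fintype.card V : ℝ) = #S + #Sᶜ := mod_cast (card_add_card_compl S).symm
  rw [Set.mem_ofPred_eq, eval_charpoly, hshift,
    det_diagonal_ite_mem_sub S (sub_ne_zero.2 hx.1) (sub_ne_zero.2 hx.2) hS hSc]
  simp only [eval_mul, eval_pow, eval_sub, eval_add, eval_X, eval_C]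
  rw [hcard]
  ring

end

/-- The characteristic polynomial of the signless Laplacian of the prime coprime graph
of ℤ/pqℤ, for distinct primes p and q. -/
theorem pcGraph_zmod_pq_signlessLaplacian_charpoly (p q : ℕ) (hp : p.Prime)
    (hq : q.Prime) (hpq : p ≠ q) :
    haveI : NeZero (p * q) := ⟨Nat.mul_ne_zero hp.pos.ne' hq.pos.ne'⟩
    (signlessLaplacian (ZMod (p * q)) (pcGraphAdd (ZMod (p * q)))).charpoly =
      (X - C ((p : ℝ) + q - 1)) ^ (p * q - p - q) *
      (X - C ((p : ℝ) * q - 2)) ^ (p + q - 2) *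
      (X ^ 2 - C ((p : ℝ) * q + 2 * p + 2 * q - 4) * X +
        C (2 * ((p : ℝ) + q - 1) * ((p : ℝ) + q - 2))) := by
  have : NeZero (p * q) := ⟨Nat.mul_ne_zero hp.pos.ne' hq.pos.ne'⟩
  set S : Finset (ZMod (p * q)) := {x | addOrderOf x = p * q}
  have hgraph : pcGraphAdd (ZMod (p * q)) = completeSplitGraph (S : Set (ZMod (p * q))) := by
    rw [pcGraphAdd_eq_completeSplitGraph hp hq (Nat.card_zmod _), coe_filter_univ]
  have hcardS : #S = Nat.totient (p * q) :=
    IsAddCyclic.card_addOrderOf_eq_totient (by rw [ZMod.card])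
  have hcardS' : #S + (p + q) = p * q + 1 := hcardS ▸ Nat.totient_prime_mul_prime_add hp hq hpq
  have hcardSc : #Sᶜ + #S = p * q := by rw [card_compl_add_card, ZMod.card]
  have hS : S.Nonempty := card_pos.1 (hcardS ▸ Nat.totient_pos.2 (NeZero.pos _))
  have hSc : Sᶜ.Nonempty :=
    ⟨0, by simpa [S] using (hp.one_lt.trans_le (Nat.le_mul_of_pos_right p hq.pos)).ne⟩
  rw [hgraph, charpoly_signlessLaplacian_completeSplitGraph S hS hSc, ZMod.card,
    show #S - 1 = p * q - p - q by omega, show #Sᶜ - 1 = p + q - 2 by omega,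
    show (#Sᶜ : ℝ) = p + q - 1 by
      rw [eq_sub_iff_add_eq]; exact_mod_cast (by omega : #Sᶜ + 1 = p + q)]
  push_cast
  rw [show (p : ℝ) * q + 2 * (p + q - 1) - 2 = p * q + 2 * p + 2 * q - 4 by ring,
    show (p : ℝ) + q - 1 - 1 = p + q - 2 by ring]
end

section
/- Let p be a prime. The characteristic polynomial of the signless Laplacian matrix Q of the prime coprime graph Θ(ℤ_p), viewed as a real matrix, equals (X − 2(p−1)) · (X − (p−2))^{p−1}; that is, the eigenvalues of Q are 2(p−1) with multiplicity 1 and p−2 with multiplicity p−1. -/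
/-!
Every element of `ℤ_p` has additive order `1` or `p`, so any two orders have gcd `1` or the prime
`p`, and `Θ(ℤ_p)` is the complete graph `K_p`. Its signless Laplacian is `J + (p - 2) I` with
`J = 𝟙𝟙ᵀ` of rank one, whose characteristic polynomial is `X ^ (p - 1) (X - p)`; the shift
by `p - 2` is `Matrix.charpoly_sub_scalar`.
-/

open Polynomial

open Matrix

theorem pcGraphAdd_eq_top_of_natCard_prime {G : Type*} [AddGroup G] (hG : (Nat.card G).Prime) :
    pcGraphAdd G = ⊤ := by
  ext x y
  refine ⟨fun h => h.1, fun hxy => ⟨hxy, ?_⟩⟩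
  have hdvd : Nat.gcd (addOrderOf x) (addOrderOf y) ∣ Nat.card G :=
    (Nat.gcd_dvd_left _ _).trans (addOrderOf_dvd_natCard x)
  exact (hG.eq_one_or_self_of_dvd _ hdvd).imp_right fun h => by rwa [h]

theorem signlessLaplacian_top (V : Type*) [Fintype V] [DecidableEq V] :
    signlessLaplacian V ⊤ = vecMulVec 1 1 + scalar V ((Fintype.card V : ℝ) - 2) := by
  ext i j
  by_cases h : i = j
  · subst h
    have hdeg : ((⊤ : SimpleGraph V).degree i : ℝ) = 1 + (Fintype.card V - 2) := by
      rw [SimpleGraph.IsRegularOfDegree.top.degree_eq i,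
        Nat.cast_sub (Fintype.card_pos_iff.mpr ⟨i⟩), Nat.cast_one]
      ring
    simp only [signlessLaplacian, of_apply, if_true, Matrix.add_apply, vecMulVec_apply,
      Pi.one_apply, mul_one, scalar_apply, diagonal_apply_eq]
    -- `signlessLaplacian` takes degrees with classical instances; `convert` bridges them
    convert hdeg
  · simp [signlessLaplacian, h]

theorem charpoly_vecMulVec_one_add_scalar {R n : Type*} [CommRing R] [Fintype n] [DecidableEq n]
    [Nonempty n] (a : R) :
    (vecMulVec 1 1 + scalar n a).charpoly =
      (X - C (a + Fintype.card n)) * (X - C a) ^ (Fintype.card n - 1) := by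
  obtain ⟨m, hm⟩ := Nat.exists_eq_add_one.mpr (Fintype.card_pos (α := n))
  have hshift := charpoly_sub_scalar (vecMulVec (1 : n → R) 1) (-a)
  rw [map_neg, sub_neg_eq_add] at hshift
  rw [hshift, charpoly_vecMulVec, one_dotProduct_one, hm, Nat.add_sub_cancel]
  simp only [sub_comp, smul_comp, pow_comp, X_comp, map_neg, Nat.cast_add,
    Nat.cast_one, map_add, map_natCast, map_one]
  rw [smul_eq_C_mul]
  simp only [map_add, map_natCast, map_one]
  ring

/-- The characteristic polynomial of the signless Laplacian of the prime coprime graph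
of ℤ/pℤ, for a prime p. -/
theorem pcGraph_zmod_p_signlessLaplacian_charpoly (p : ℕ) (hp : p.Prime) :
    haveI : NeZero p := ⟨hp.pos.ne'⟩
    (signlessLaplacian (ZMod p) (pcGraphAdd (ZMod p))).charpoly =
      (X - C (2 * ((p : ℝ) - 1))) * (X - C ((p : ℝ) - 2)) ^ (p - 1) := by
  have : NeZero p := ⟨hp.pos.ne'⟩
  rw [pcGraphAdd_eq_top_of_natCard_prime (by rwa [Nat.card_zmod]), signlessLaplacian_top,
    charpoly_vecMulVec_one_add_scalar, ZMod.card, show (p : ℝ) - 2 + p = 2 * (p - 1) by ring]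
end

section
/- Let p be a prime, let m ≥ 2 be a natural number, and set n = p^m. The characteristic polynomial of the signless Laplacian matrix Q of the prime coprime graph Θ(D_n) of the dihedral group D_n of order 2n, viewed as a real matrix, equals (X − (2n−2))^{n+p−1} · (X − (n+p))^{n−p−1} · (X² − 2(2n+p−1)·X + ((2n+p−1)² − (2n² − 2n − p² + 1))). In particular, the eigenvalues of Q are 2n−2 with multiplicity n+p−1, n+p with multiplicity n−p−1, and 2n+p−1 ± √(2n² − 2n − p² + 1), each with multiplicity 1. -/
open Polynomial

/-!
In `D_{p^m}` every element has order `2` or a power of `p`, so `gcd (o x) (o y)` is `1` or a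
prime unless `p²` divides both orders. Hence `Θ(D_n)` is a complete split graph: the `n + p`
elements with `p² ∤ o x` (the `n` reflections and the `p` rotations of order dividing `p`) are
adjacent to every other vertex, and the remaining `n - p` rotations are pairwise non-adjacent.
Its signless Laplacian is a diagonal matrix plus a rank-two matrix, so the matrix determinant
lemma evaluates `det (t - Q)` for every `t` off the two diagonal values, and this pins down the
characteristic polynomial.
-/

open Matrix Finset

section SplitOnes

/-- Rank at most two: `[i ∈ S ∨ j ∈ S] = [i ∈ S] + [i ∉ S] * [j ∈ S]`. -/
def splitOnes (K : Type*) {V : Type*} [Zero K] [One K] [DecidableEq V] (S : Finset V) :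
    Matrix V V K :=
  of fun i j => if i ∈ S ∨ j ∈ S then 1 else 0

variable {K V : Type*} [Field K] [Fintype V] [DecidableEq V]

theorem det_diagonal_sub_splitOnes (S : Finset V) {α β : K} (hα : α ≠ 0) (hβ : β ≠ 0) :
    (diagonal (fun i => if i ∈ S then α else β) - splitOnes K S).det * (α * β) =
      α ^ #S * β ^ #Sᶜ * (α * β - #S * β - #S * #Sᶜ) := by
  set Δ : Matrix V V K := diagonal fun i => if i ∈ S then α else β
  set U : Matrix V (Fin 2) K := of fun i => ![if i ∈ S then -1 else 0, if i ∈ S then 0 else -1]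
  set W : Matrix (Fin 2) V K := of fun k j => ![1, if j ∈ S then 1 else 0] k
  have hUW : Δ - splitOnes K S = Δ + U * W := by
    ext i j
    by_cases hi : i ∈ S <;> by_cases hj : j ∈ S <;>
      simp [Δ, U, W, splitOnes, Matrix.mul_apply, Fin.sum_univ_two, hi, hj, sub_eq_add_neg]
  have hdet : Δ.det = α ^ #S * β ^ #Sᶜ := by
    rw [det_diagonal, Finset.prod_ite]
    simp [Finset.filter_not, Finset.compl_eq_univ_sdiff]
  have hinv : Δ⁻¹ = diagonal fun i => if i ∈ S then α⁻¹ else β⁻¹ := by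
    refine inv_eq_left_inv ?_
    rw [diagonal_mul_diagonal, ← diagonal_one]
    congr 1; ext i; split_ifs <;> field_simp
  have hsmall : 1 + W * Δ⁻¹ * U = !![1 - #S * α⁻¹, -(#Sᶜ * β⁻¹); -(#S * α⁻¹), 1] := by
    ext k l
    rw [hinv, Matrix.mul_assoc, Matrix.add_apply, Matrix.mul_apply]
    fin_cases k <;> fin_cases l <;>
      simp [U, W, diagonal_mul, Finset.sum_ite, Finset.filter_not, Finset.compl_eq_univ_sdiff,
        Finset.filter_mem_eq_inter, sub_eq_add_neg]
  rw [hUW, det_add_mul _ _ (by simp [hdet, hα, hβ]), hsmall, det_fin_two_of, hdet]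
  field_simp

theorem charpoly_diagonal_add_splitOnes [Infinite K] {S : Finset V} (hS : S.Nonempty)
    (hSc : Sᶜ.Nonempty) (c c' : K) :
    (diagonal (fun i => if i ∈ S then c else c') + splitOnes K S).charpoly =
      (X - C c) ^ (#S - 1) * (X - C c') ^ (#Sᶜ - 1) *
        (X ^ 2 - C (c + c' + #S) * X + C (c * c' + #S * c' - #S * #Sᶜ)) := by
  refine eq_of_infinite_eval_eq _ _ <|
    (Set.toFinite {c, c'}).infinite_compl.mono fun t ht => ?_
  simp only [Set.mem_compl_iff, Set.mem_insert_iff, Set.mem_singleton_iff, not_or] at ht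
  have hα : t - c ≠ 0 := sub_ne_zero.mpr ht.1
  have hβ : t - c' ≠ 0 := sub_ne_zero.mpr ht.2
  have hshift : scalar V t - (diagonal (fun i => if i ∈ S then c else c') + splitOnes K S) =
      diagonal (fun i => if i ∈ S then t - c else t - c') - splitOnes K S := by
    rw [scalar_apply, sub_add_eq_sub_sub, diagonal_sub]
    congr 2; ext i; split_ifs <;> rfl
  rw [Set.mem_ofPred_eq, eval_charpoly, hshift]
  refine mul_right_cancel₀ (mul_ne_zero hα hβ) ?_
  rw [det_diagonal_sub_splitOnes S hα hβ]
  simp only [eval_mul, eval_pow, eval_sub, eval_add, eval_X, eval_C]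
  rw [← pow_sub_one_mul hS.card_pos.ne' (t - c), ← pow_sub_one_mul hSc.card_pos.ne' (t - c')]
  ring

end SplitOnes

theorem SimpleGraph.degree_eq_of_adj_iff {V : Type*} [Fintype V] [DecidableEq V] {G : SimpleGraph V}
    [DecidableRel G.Adj] {S : Finset V} (hG : ∀ x y, G.Adj x y ↔ x ≠ y ∧ (x ∈ S ∨ y ∈ S))
    (v : V) : G.degree v = if v ∈ S then Fintype.card V - 1 else #S := by
  rw [← card_neighborFinset_eq_degree, neighborFinset_eq_filter]
  split_ifs with hv
  · rw [← Finset.card_univ, ← Finset.card_erase_of_mem (mem_univ v)]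
    congr 1; ext w; simp [hG, hv, eq_comm]
  · congr 1; ext w; simp only [hG, mem_filter, mem_univ, true_and, hv, false_or]
    exact ⟨fun h => h.2, fun h => ⟨by rintro rfl; exact hv h, h⟩⟩

theorem signlessLaplacian_eq_of_adj_iff {V : Type*} [Fintype V] [DecidableEq V]
    {G : SimpleGraph V} {S : Finset V} (hG : ∀ x y, G.Adj x y ↔ x ≠ y ∧ (x ∈ S ∨ y ∈ S)) :
    signlessLaplacian V G =
      diagonal (fun i => if i ∈ S then (#S + #Sᶜ - 2 : ℝ) else #S) + splitOnes ℝ S := by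
  classical
  ext i j
  rw [signlessLaplacian, splitOnes, of_apply, Matrix.add_apply, of_apply]
  rcases eq_or_ne i j with rfl | hij
  · rw [if_pos rfl, SimpleGraph.degree_eq_of_adj_iff hG, diagonal_apply_eq]
    by_cases hi : i ∈ S
    · rw [if_pos hi, if_pos hi, if_pos (Or.inl hi), Nat.cast_sub (Fintype.card_pos_iff.mpr ⟨i⟩),
        ← card_add_card_compl S]
      push_cast; ring
    · simp [hi]
  · simp [hij, hG]

theorem Nat.not_sq_dvd_iff_dvd_prime {p d k : ℕ} (hp : p.Prime) (hd : d ∣ p ^ k) :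
    ¬ p ^ 2 ∣ d ↔ d ∣ p := by
  obtain ⟨j, -, rfl⟩ := (Nat.dvd_prime_pow hp).mp hd
  have h := Nat.pow_dvd_pow_iff_le_right (x := p) (k := j) (l := 1) hp.one_lt
  rw [pow_one] at h
  rw [h, Nat.pow_dvd_pow_iff_le_right hp.one_lt]
  omega

theorem pcGraph_adj_iff_of_orderOf {G : Type*} [Group G] {p : ℕ} (hp : p.Prime)
    (hG : ∀ x : G, (orderOf x).Prime ∨ ∃ k, orderOf x = p ^ k) {x y : G} :
    (pcGraph G).Adj x y ↔ x ≠ y ∧ (¬ p ^ 2 ∣ orderOf x ∨ ¬ p ^ 2 ∣ orderOf y) := by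
  have one_or_prime : ∀ z : G, ¬ p ^ 2 ∣ orderOf z → orderOf z = 1 ∨ (orderOf z).Prime := by
    intro z hz
    rcases hG z with h | ⟨k, hk⟩
    · exact Or.inr h
    · rcases (Nat.dvd_prime hp).mp ((Nat.not_sq_dvd_iff_dvd_prime hp (dvd_of_eq hk)).mp hz)
        with h | h
      exacts [Or.inl h, Or.inr (h ▸ hp)]
  have gcd_one_or_prime : ∀ d e : ℕ, d = 1 ∨ d.Prime → d.gcd e = 1 ∨ (d.gcd e).Prime := by
    rintro d e (rfl | hd)
    · exact Or.inl (Nat.gcd_one_left e)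
    · rcases (Nat.dvd_prime hd).mp (Nat.gcd_dvd_left d e) with h | h
      exacts [Or.inl h, Or.inr (by rwa [h])]
  refine and_congr_right fun _ => ⟨fun h => ?_, ?_⟩
  · have hsqf : Squarefree ((orderOf x).gcd (orderOf y)) :=
      h.elim (fun h1 => h1 ▸ squarefree_one) fun hq => hq.prime.squarefree
    rw [← not_and_or]
    rintro ⟨hx, hy⟩
    exact hp.prime.not_isUnit (hsqf p (sq p ▸ Nat.dvd_gcd hx hy))
  · rintro (hx | hy)
    · exact gcd_one_or_prime _ _ (one_or_prime x hx)
    · rw [Nat.gcd_comm]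
      exact gcd_one_or_prime _ _ (one_or_prime y hy)

theorem IsAddCyclic.card_nsmul_eq_zero {α : Type*} [AddGroup α] [Fintype α] [DecidableEq α]
    [IsAddCyclic α] {d : ℕ} (hd : d ∣ Fintype.card α) : #{x : α | d • x = 0} = d := by
  rw [← sum_card_addOrderOf_eq_card_nsmul_eq_zero
      (ne_zero_of_dvd_ne_zero Fintype.card_ne_zero hd),
    Finset.sum_congr rfl fun e he =>
      IsAddCyclic.card_addOrderOf_eq_totient ((Nat.dvd_of_mem_divisors he).trans hd),
    Nat.sum_totient]

namespace DihedralGroup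

theorem orderOf_r_eq_addOrderOf {n : ℕ} [NeZero n] (i : ZMod n) :
    orderOf (r i) = addOrderOf i := by
  rw [orderOf_r, ← ZMod.addOrderOf_coe _ (NeZero.ne n), ZMod.natCast_zmod_val]

theorem card_filter {n : ℕ} [NeZero n] (P : DihedralGroup n → Prop) [DecidablePred P] :
    #{x | P x} = #{i | P (r i)} + #{i | P (sr i)} := by
  simp only [Finset.card_filter]
  rw [← equivSum.symm.sum_comp, Fintype.sum_sum_type]
  rfl

variable {p m : ℕ} (hp : p.Prime)
include hp

theorem orderOf_prime_or_eq_prime_pow (x : DihedralGroup (p ^ m)) :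
    (orderOf x).Prime ∨ ∃ k, orderOf x = p ^ k := by
  cases x with
  | r i =>
    obtain ⟨k, -, hk⟩ := (Nat.dvd_prime_pow hp).mp <|
      orderOf_dvd_of_pow_eq_one (x := r i) (by rw [r_pow, ZMod.natCast_self, mul_zero, r_zero])
    exact Or.inr ⟨k, hk⟩
  | sr i => exact Or.inl (orderOf_sr i ▸ Nat.prime_two)

theorem card_filter_not_sq_dvd_orderOf [NeZero (p ^ m)] (hm : m ≠ 0) :
    #{x : DihedralGroup (p ^ m) | ¬ p ^ 2 ∣ orderOf x} = p ^ m + p := by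
  have hr : ∀ i : ZMod (p ^ m), ¬ p ^ 2 ∣ orderOf (r i) ↔ p • i = 0 := fun i => by
    rw [orderOf_r_eq_addOrderOf, Nat.not_sq_dvd_iff_dvd_prime hp
      (ZMod.card (p ^ m) ▸ addOrderOf_dvd_card), addOrderOf_dvd_iff_nsmul_eq_zero]
  have hsr : ¬ p ^ 2 ∣ 2 := fun h =>
    absurd (Nat.le_of_dvd two_pos h) (by nlinarith [hp.two_le])
  rw [card_filter]
  simp only [hr, orderOf_sr, hsr, not_false_eq_true, filter_true, card_univ, ZMod.card]
  rw [IsAddCyclic.card_nsmul_eq_zero (by rw [ZMod.card]; exact dvd_pow_self p hm), add_comm]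

end DihedralGroup

/-- The characteristic polynomial of the signless Laplacian of the prime coprime graph
of the dihedral group of order 2p^m, for a prime p and m ≥ 2, with n = p^m. -/
theorem pcGraph_dihedral_prime_pow_signlessLaplacian_charpoly (p m : ℕ) (hp : p.Prime)
    (hm : 2 ≤ m) :
    haveI : NeZero (p ^ m) := ⟨pow_ne_zero m hp.pos.ne'⟩
    let n : ℕ := p ^ m
    (signlessLaplacian (DihedralGroup n) (pcGraph (DihedralGroup n))).charpoly =
      (X - C (2 * (n : ℝ) - 2)) ^ (n + p - 1) *
      (X - C ((n : ℝ) + p)) ^ (n - p - 1) *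
      (X ^ 2 - C (2 * (2 * (n : ℝ) + p - 1)) * X +
        C ((2 * (n : ℝ) + p - 1) ^ 2 - (2 * (n : ℝ) ^ 2 - 2 * n - (p : ℝ) ^ 2 + 1))) := by
  have : NeZero (p ^ m) := ⟨pow_ne_zero m hp.pos.ne'⟩
  intro n
  set S : Finset (DihedralGroup n) := {x | ¬ p ^ 2 ∣ orderOf x}
  have hpn : p < n := by
    simpa using Nat.pow_lt_pow_right hp.one_lt (show 1 < m by omega)
  have hS : #S = n + p := DihedralGroup.card_filter_not_sq_dvd_orderOf hp (by omega)
  have hSc : #Sᶜ = n - p := by rw [card_compl, DihedralGroup.card, hS]; omega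
  have hadj (x y : DihedralGroup n) : (pcGraph _).Adj x y ↔ x ≠ y ∧ (x ∈ S ∨ y ∈ S) := by
    simpa [S] using pcGraph_adj_iff_of_orderOf hp (DihedralGroup.orderOf_prime_or_eq_prime_pow hp)
  rw [signlessLaplacian_eq_of_adj_iff hadj, charpoly_diagonal_add_splitOnes
    (card_pos.mp (by omega)) (card_pos.mp (by omega)), hS, hSc]
  push_cast [Nat.cast_sub hpn.le]
  ring_nf
end
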